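/- arXiv:1011.4600 — 7 statements merged into one kernel-verified Lean document; each statement's English description precedes it below -/
import Mathlib

section
/- Gowers–Cauchy–Schwarz inequality: Let G be a finite abelian group and for each subset S ⊆ [k] let f_S : G → ℂ. Then |𝔼_{x,y₁,…,y_k} ∏_{S⊆[k]} C^{k−|S|} f_S(x + Σ_{i∈S} y_i)| ≤ ∏_{S⊆[k]} ‖f_S‖_{U^k}. -/
/-- The `k`-th Gowers uniformity norm of `f : G → ℂ` on a finite abelian group `G`. -/
noncomputable def gowersNorm {G : Type} [AddCommGroup G] [Fintype G] [DecidableEq G]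
    (k : ℕ) (f : G → ℂ) : ℝ :=
  (‖(∑ x : G, ∑ y : Fin k → G, ∏ S : Finset (Fin k),
      (fun z : ℂ => (starRingEnd ℂ) z)^[k - S.card] (f (x + ∑ i ∈ S, y i))) /
    (Fintype.card G : ℂ) ^ (k + 1)‖) ^ ((1 : ℝ) / 2 ^ k)

/-!
Write `Λ(f)` for `gowersSum f`, the Gowers inner product without its normalisation. Fix a
coordinate `i` and the `yⱼ` with `j ≠ i`. The cube splits into the face `S ∌ i`, evaluated at
`x`, and the face `S ∋ i`, evaluated at `x + yᵢ`; summing over `x` and `yᵢ` independently writes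
`|G| Λ(f)` as `∑_y A(y) B(y)`. The same computation for the families `S ↦ f (S \ {i})` and
`S ↦ f (S ∪ {i})` gives `∑_y |A(y)|²` and `∑_y |B(y)|²`, because the two faces carry opposite
conjugation parities. Cauchy–Schwarz gives `|Λ(f)|² ≤ |Λ(f (· \ {i}))| |Λ(f (· ∪ {i}))|`, and
applying this once in every coordinate leaves `2 ^ k` families constant in `S`, for which `Λ` is
the `2 ^ k`-th power of a Gowers norm up to normalisation.
-/

open Finset Function ComplexConjugate

theorem Fintype.sum_sum_update {ι G M : Type*} [Fintype ι] [DecidableEq ι] [Fintype G]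
    [AddCommMonoid M] (i : ι) (F : (ι → G) → M) :
    ∑ y : ι → G, ∑ t : G, F (update y i t) = Fintype.card G • ∑ y, F y := by
  have hΦ : Involutive fun p : (ι → G) × G => (update p.1 i p.2, p.1 i) := fun p => by simp
  rw [← Fintype.sum_prod_type', ← Equiv.sum_comp (hΦ.toPerm _)]
  simp [Fintype.sum_prod_type, smul_sum]

theorem Finset.prod_eq_prod_powerset_erase_mul {ι M : Type*} [Fintype ι] [DecidableEq ι]
    [CommMonoid M] (i : ι) (g : Finset ι → M) :
    ∏ S, g S =
      (∏ S ∈ (univ.erase i).powerset, g S) * ∏ S ∈ (univ.erase i).powerset, g (insert i S) := by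
  rw [← prod_powerset_insert (notMem_erase i univ), insert_erase (mem_univ i), powerset_univ]

theorem norm_sum_mul_sq_le {ι R : Type*} [SeminormedRing R] (s : Finset ι) (f g : ι → R) :
    ‖∑ i ∈ s, f i * g i‖ ^ 2 ≤ (∑ i ∈ s, ‖f i‖ ^ 2) * ∑ i ∈ s, ‖g i‖ ^ 2 := by
  calc ‖∑ i ∈ s, f i * g i‖ ^ 2 ≤ (∑ i ∈ s, ‖f i‖ * ‖g i‖) ^ 2 := by
        gcongr
        exact (norm_sum_le _ _).trans (sum_le_sum fun i _ => norm_mul_le _ _)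
    _ ≤ _ := sum_mul_sq_le_sq_mul_sq _ _ _

theorem Complex.norm_sum_mul_conj {ι : Type*} (s : Finset ι) (f : ι → ℂ) :
    ‖∑ i ∈ s, f i * conj (f i)‖ = ∑ i ∈ s, ‖f i‖ ^ 2 := by
  simp_rw [Complex.mul_conj', ← Complex.ofReal_pow, ← Complex.ofReal_sum, Complex.norm_real,
    Real.norm_of_nonneg (sum_nonneg fun i _ => sq_nonneg ‖f i‖)]

theorem Fin.card_univ_erase_lt {k : ℕ} (i : Fin k) : #(univ.erase i) < k :=
  (card_erase_lt_of_mem (mem_univ i)).trans_eq (card_fin k)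

section AddCommMonoid

variable {ι G : Type*} [AddCommMonoid G] {k : ℕ}

noncomputable def faceProd (n : ℕ) (s : Finset ι) (g : Finset ι → G → ℂ)
    (y : ι → G) (x : G) : ℂ :=
  ∏ S ∈ s.powerset, conj^[n - #S] (g S (x + ∑ j ∈ S, y j))

theorem faceProd_congr {n : ℕ} {s : Finset ι} {g g' : Finset ι → G → ℂ}
    (h : ∀ S ⊆ s, g S = g' S) : faceProd n s g = faceProd n s g' := by
  ext y x
  exact prod_congr rfl fun S hS => by rw [h S (mem_powerset.1 hS)]

theorem faceProd_eq_conj {n : ℕ} {s : Finset ι} (hs : #s < n)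
    (g : Finset ι → G → ℂ) (y : ι → G) (x : G) :
    faceProd n s g y x = conj (faceProd (n - 1) s g y x) := by
  rw [faceProd, faceProd, map_prod]
  refine prod_congr rfl fun S hS => ?_
  have hSn : 0 < n - #S := Nat.sub_pos_of_lt ((card_le_card (mem_powerset.1 hS)).trans_lt hs)
  rw [← comp_iterate_pred_of_pos _ hSn, comp_apply, Nat.pred_eq_sub_one, Nat.sub_right_comm]

noncomputable def cubeProd (g : Finset (Fin k) → G → ℂ) (x : G) (y : Fin k → G) : ℂ :=
  ∏ S, conj^[k - #S] (g S (x + ∑ i ∈ S, y i))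

theorem cubeProd_update (g : Finset (Fin k) → G → ℂ) (i : Fin k) (x t : G) (y : Fin k → G) :
    cubeProd g x (update y i t) = faceProd k (univ.erase i) g y x *
      faceProd (k - 1) (univ.erase i) (fun S => g (insert i S)) y (x + t) := by
  rw [cubeProd, prod_eq_prod_powerset_erase_mul i]
  congr 1 <;> refine prod_congr rfl fun S hS => ?_
  all_goals have hi : i ∉ S := fun h => notMem_erase i univ (mem_powerset.1 hS h)
  · rw [sum_update_of_notMem hi]
  · rw [card_insert_of_notMem hi, sum_insert hi, update_self, sum_update_of_notMem hi,
      add_assoc, Nat.sub_add_eq, Nat.sub_right_comm]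

noncomputable def gowersSum [Fintype G] (g : Finset (Fin k) → G → ℂ) : ℂ :=
  ∑ x, ∑ y, cubeProd g x y

end AddCommMonoid

section AddCommGroup

variable {G : Type*} [AddCommGroup G] [Fintype G] {k : ℕ}

theorem card_mul_gowersSum_eq (g : Finset (Fin k) → G → ℂ) (i : Fin k)
    (a b : (Fin k → G) → G → ℂ) (h : ∀ x t y, cubeProd g x (update y i t) = a y x * b y (x + t)) :
    Fintype.card G * gowersSum g = ∑ y, (∑ x, a y x) * ∑ x, b y x := by
  calc (Fintype.card G : ℂ) * gowersSum g = ∑ x, ∑ y, ∑ t, cubeProd g x (update y i t) := by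
        rw [gowersSum, mul_sum]
        exact sum_congr rfl fun x _ => by rw [Fintype.sum_sum_update, nsmul_eq_mul]
    _ = ∑ y, ∑ x, a y x * ∑ t, b y (x + t) := by
        rw [sum_comm]
        simp_rw [h, mul_sum]
    _ = ∑ y, (∑ x, a y x) * ∑ x, b y x := by
        refine sum_congr rfl fun y _ => ?_
        rw [sum_mul]
        exact sum_congr rfl fun x _ => congrArg _ (Equiv.sum_comp (Equiv.addLeft x) (b y))

theorem card_mul_gowersSum_eq_sum_mul (f : Finset (Fin k) → G → ℂ) (i : Fin k) :
    Fintype.card G * gowersSum f = ∑ y, (∑ x, faceProd k (univ.erase i) f y x) *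
      ∑ x, faceProd (k - 1) (univ.erase i) (fun S => f (insert i S)) y x :=
  card_mul_gowersSum_eq f i _ _ fun x t y => cubeProd_update f i x t y

theorem card_mul_gowersSum_erase (f : Finset (Fin k) → G → ℂ) (i : Fin k) :
    Fintype.card G * gowersSum (fun S => f (S.erase i)) = ∑ y,
      (∑ x, faceProd k (univ.erase i) f y x) * conj (∑ x, faceProd k (univ.erase i) f y x) := by
  simp_rw [map_sum]
  refine card_mul_gowersSum_eq _ i _ _ fun x t y => ?_
  have hf : faceProd k (univ.erase i) (fun S => f (S.erase i)) = faceProd k (univ.erase i) f :=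
    faceProd_congr fun S hS => by rw [erase_eq_of_notMem fun h => notMem_erase i _ (hS h)]
  have hf' : faceProd (k - 1) (univ.erase i) (fun S => f ((insert i S).erase i)) =
      faceProd (k - 1) (univ.erase i) f :=
    faceProd_congr fun S hS => by rw [erase_insert fun h => notMem_erase i _ (hS h)]
  rw [cubeProd_update, hf, hf', faceProd_eq_conj (Fin.card_univ_erase_lt i) f y (x + t),
    Complex.conj_conj]

theorem card_mul_gowersSum_insert (f : Finset (Fin k) → G → ℂ) (i : Fin k) :
    Fintype.card G * gowersSum (fun S => f (insert i S)) = ∑ y,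
      (∑ x, faceProd (k - 1) (univ.erase i) (fun S => f (insert i S)) y x) *
        conj (∑ x, faceProd (k - 1) (univ.erase i) (fun S => f (insert i S)) y x) := by
  simp_rw [map_sum, mul_comm (∑ x, faceProd _ _ _ _ x)]
  refine card_mul_gowersSum_eq _ i _ _ fun x t y => ?_
  simp_rw [cubeProd_update, insert_idem, faceProd_eq_conj (Fin.card_univ_erase_lt i)]

theorem norm_gowersSum_sq_le (f : Finset (Fin k) → G → ℂ) (i : Fin k) :
    ‖gowersSum f‖ ^ 2 ≤
      ‖gowersSum fun S => f (S.erase i)‖ * ‖gowersSum fun S => f (insert i S)‖ := by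
  have key : ‖(Fintype.card G : ℂ) * gowersSum f‖ ^ 2 ≤
      ‖(Fintype.card G : ℂ) * gowersSum fun S => f (S.erase i)‖ *
        ‖(Fintype.card G : ℂ) * gowersSum fun S => f (insert i S)‖ := by
    rw [card_mul_gowersSum_eq_sum_mul f i, card_mul_gowersSum_erase, card_mul_gowersSum_insert,
      Complex.norm_sum_mul_conj, Complex.norm_sum_mul_conj]
    exact norm_sum_mul_sq_le _ _ _
  simp only [norm_mul, Complex.norm_natCast, mul_pow, mul_mul_mul_comm _ _ (Fintype.card G : ℝ),
    ← sq] at key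
  exact le_of_mul_le_mul_left key (by positivity)

theorem norm_gowersSum_pow_le (T : Finset (Fin k)) (f : Finset (Fin k) → G → ℂ) :
    ‖gowersSum f‖ ^ 2 ^ #T ≤ ∏ ε ∈ T.powerset, ‖gowersSum fun S => f (S \ T ∪ ε)‖ := by
  induction T using Finset.induction_on generalizing f with
  | empty => simp
  | @insert i T hiT ih =>
    rw [prod_powerset_insert hiT, card_insert_of_notMem hiT, pow_succ', pow_mul]
    calc (‖gowersSum f‖ ^ 2) ^ 2 ^ #T
        ≤ (‖gowersSum fun S => f (S.erase i)‖ * ‖gowersSum fun S => f (insert i S)‖) ^ 2 ^ #T :=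
          pow_le_pow_left₀ (sq_nonneg _) (norm_gowersSum_sq_le f i) _
      _ ≤ _ := by
          rw [mul_pow]
          gcongr ?_ * ?_
          · refine (ih _).trans_eq (prod_congr rfl fun ε hε => ?_)
            have hiε : i ∉ ε := fun h => hiT (mem_powerset.1 hε h)
            congr! 4 with S
            grind
          · refine (ih _).trans_eq (prod_congr rfl fun ε _ => ?_)
            congr! 4 with S
            grind

end AddCommGroup

theorem gowersNorm_pow_two_pow {G : Type} [AddCommGroup G] [Fintype G] [DecidableEq G] (k : ℕ)
    (f : G → ℂ) :
    gowersNorm k f ^ 2 ^ k =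
      ‖gowersSum (fun (_ : Finset (Fin k)) => f) / Fintype.card G ^ (k + 1)‖ := by
  rw [gowersNorm, ← Real.rpow_natCast, ← Real.rpow_mul (norm_nonneg _)]
  push_cast
  rw [one_div_mul_cancel (by positivity), Real.rpow_one]
  rfl

/-- Gowers–Cauchy–Schwarz inequality: for a family of functions `F S : G → ℂ` indexed by
subsets `S ⊆ [k]`,
`|𝔼_{x,y₁,…,y_k} ∏_{S⊆[k]} C^{k-|S|} F_S(x + ∑_{i∈S} y_i)| ≤ ∏_{S⊆[k]} ‖F_S‖_{U^k}`. -/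
theorem gowers_cauchy_schwarz {G : Type} [AddCommGroup G] [Fintype G] [DecidableEq G]
    (k : ℕ) (F : Finset (Fin k) → G → ℂ) :
    ‖(∑ x : G, ∑ y : Fin k → G, ∏ S : Finset (Fin k),
        (fun z : ℂ => (starRingEnd ℂ) z)^[k - S.card] (F S (x + ∑ i ∈ S, y i))) /
      (Fintype.card G : ℂ) ^ (k + 1)‖ ≤ ∏ S : Finset (Fin k), gowersNorm k (F S) := by
  show ‖gowersSum F / _‖ ≤ _
  have key := norm_gowersSum_pow_le univ F
  simp only [card_univ, Fintype.card_fin, powerset_univ,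
    sdiff_eq_empty_iff_subset.2 (subset_univ _), empty_union] at key
  refine le_of_pow_le_pow_left₀ (pow_ne_zero k two_ne_zero)
    (prod_nonneg fun S _ => Real.rpow_nonneg (norm_nonneg _) _) ?_
  rw [← prod_pow]
  simp_rw [gowersNorm_pow_two_pow, norm_div]
  rw [prod_div_distrib, prod_const, card_univ, Fintype.card_finset, Fintype.card_fin, div_pow]
  exact div_le_div_of_nonneg_right key (by positivity)
end

section
/- Any system of m linear forms over 𝔽_p in which every two forms are linearly independent (no form is a scalar multiple of another) has Cauchy–Schwarz complexity at most m − 2. -/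
/-- A system of linear forms `L : Fin m → 𝔽_p^k` has Cauchy–Schwarz complexity at most `s`
if for every `i`, the remaining forms can be partitioned (here: colored by `Fin (s+1)`)
into `s+1` classes such that `L i` is not in the linear span of any single class. -/
def CSComplexityLE {p k m : ℕ} (L : Fin m → Fin k → ZMod p) (s : ℕ) : Prop :=
  ∀ i : Fin m, ∃ part : Fin m → Fin (s + 1), ∀ c : Fin (s + 1),
    L i ∉ Submodule.span (ZMod p) (L '' {j | j ≠ i ∧ part j = c})

/-- Any system of `m` pairwise linearly independent nonzero linear forms over `𝔽_p`
has Cauchy–Schwarz complexity at most `m - 2`. -/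
theorem csComplexity_le_of_pairwise_indep {p k m : ℕ} [Fact p.Prime]
    (L : Fin m → Fin k → ZMod p) (hne : ∀ i, L i ≠ 0)
    (hpair : ∀ i j, i ≠ j → ∀ c : ZMod p, L i ≠ c • L j) :
    CSComplexityLE L (m - 2) := by
  intro i
  set part : Fin m → Fin (m - 2 + 1) := fun j =>
    ⟨min (m - 2) (if j.val < i.val then j.val else j.val - 1),
      Nat.lt_succ_of_le (Nat.min_le_left _ _)⟩ with hpart
  have hval : ∀ j : Fin m, j ≠ i → (if j.val < i.val then j.val else j.val - 1) ≤ m - 2 := by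
    intro j hj
    have hji : j.val ≠ i.val := fun h => hj (Fin.ext h)
    have h1 := i.isLt
    have h2 := j.isLt
    split_ifs with h <;> omega
  have hinj : ∀ j₁ j₂ : Fin m, j₁ ≠ i → j₂ ≠ i → part j₁ = part j₂ → j₁ = j₂ := by
    intro j₁ j₂ h₁ h₂ heq
    have e₁ := hval j₁ h₁
    have e₂ := hval j₂ h₂
    have hv : min (m - 2) (if j₁.val < i.val then j₁.val else j₁.val - 1)
        = min (m - 2) (if j₂.val < i.val then j₂.val else j₂.val - 1) := by
      simpa [hpart] using congrArg Fin.val heq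
    rw [Nat.min_eq_right e₁, Nat.min_eq_right e₂] at hv
    have n₁ : j₁.val ≠ i.val := fun h => h₁ (Fin.ext h)
    have n₂ : j₂.val ≠ i.val := fun h => h₂ (Fin.ext h)
    apply Fin.ext
    split_ifs at hv <;> omega
  refine ⟨part, fun c hmem => ?_⟩
  rcases Set.eq_empty_or_nonempty {j | j ≠ i ∧ part j = c} with hS | ⟨j₀, hj₀⟩
  · rw [hS, Set.image_empty, Submodule.span_empty, Submodule.mem_bot] at hmem
    exact hne i hmem
  · have hsub : L '' {j | j ≠ i ∧ part j = c} ⊆ {L j₀} := by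
      rintro _ ⟨j, hj, rfl⟩
      have := hinj j j₀ hj.1 hj₀.1 (hj.2.trans hj₀.2.symm)
      subst this; rfl
    have hmem' : L i ∈ Submodule.span (ZMod p) ({L j₀} : Set (Fin k → ZMod p)) :=
      Submodule.span_mono hsub hmem
    obtain ⟨a, ha⟩ := Submodule.mem_span_singleton.mp hmem'
    exact hpair i j₀ (Ne.symm hj₀.1) a ha.symm
end

section
/- Let B be a symmetric d-multilinear form on 𝔽_p^n with d < p, and let Q(x₁,…,x_k) = Σ_{u∈U^d} c_u B(x_{u₁},…,x_{u_d}) be a linear combination over nondecreasing tuples u = (u₁≤…≤u_d) ∈ [k]^d with not all c_u zero. Then there exist a₁,…,a_k ∈ 𝔽_p and nonzero α ∈ 𝔽_p such that Q(a₁w,…,a_kw) = α·B(w,…,w) for every w ∈ 𝔽_p^n. -/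
/-!
By multilinearity, `Q(a₁w,…,a_kw) = (∑_u c_u a^u) · B(w,…,w)`, so it suffices to find `a` with
`∑_u c_u a^u ≠ 0`. Distinct nondecreasing tuples have distinct exponent vectors, so this is a
nonzero homogeneous polynomial of degree `d < p`, and such a polynomial cannot vanish on all of
`𝔽_p^k`.
-/

open Finset MvPolynomial

theorem Fin.sum_singleton_eq_ofFn {α : Type*} {d : ℕ} (u : Fin d → α) :
    ∑ j, ({u j} : Multiset α) = List.ofFn u := by
  rw [← Fin.univ_val_map, ← Multiset.sum_map_singleton (univ.val.map u), Multiset.map_map]; rfl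

theorem Monotone.eq_of_sum_single_eq {α : Type*} [LinearOrder α] {d : ℕ} {u v : Fin d → α}
    (hu : Monotone u) (hv : Monotone v)
    (h : ∑ j, Finsupp.single (u j) 1 = ∑ j, Finsupp.single (v j) 1) : u = v := by
  have hperm : (List.ofFn u).Perm (List.ofFn v) := by
    simpa only [map_sum, Finsupp.toMultiset_single, one_nsmul, Fin.sum_singleton_eq_ofFn,
      Multiset.coe_eq_coe] using congrArg Finsupp.toMultiset h
  exact List.ofFn_injective (hperm.eq_of_sortedLE hu.sortedLE_ofFn hv.sortedLE_ofFn)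

namespace MvPolynomial

variable {σ R : Type*}

theorem C_mul_prod_X_eq_monomial [CommSemiring R] {ι : Type*} (s : Finset ι) (u : ι → σ)
    (r : R) : C r * ∏ j ∈ s, X (u j) = monomial (∑ j ∈ s, Finsupp.single (u j) 1) r := by
  simp only [X, ← monomial_sum_one, C_mul_monomial, mul_one]

variable [Fintype σ] {d : ℕ}

theorem isHomogeneous_sum_C_mul_prod_X [CommSemiring R] (c : (Fin d → σ) → R) :
    (∑ u, C (c u) * ∏ j, X (u j) : MvPolynomial σ R).IsHomogeneous d := by
  refine IsHomogeneous.sum _ _ _ fun u _ => ?_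
  simpa using (IsHomogeneous.prod univ (fun j => (X (u j) : MvPolynomial σ R)) (fun _ => 1)
    fun j _ => isHomogeneous_X R (u j)).C_mul (c u)

theorem coeff_sum_C_mul_prod_X_of_monotone [CommSemiring R] [LinearOrder σ]
    {c : (Fin d → σ) → R} (hmono : ∀ u, c u ≠ 0 → Monotone u) {v : Fin d → σ} (hv : Monotone v) :
    coeff (∑ j, Finsupp.single (v j) 1) (∑ u, C (c u) * ∏ j, X (u j)) = c v := by
  simp only [C_mul_prod_X_eq_monomial, coeff_sum, coeff_monomial]
  refine (Finset.sum_eq_single v (fun u _ huv => ?_) (by simp)).trans (if_pos rfl)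
  by_cases hu : c u = 0
  · simp [hu]
  · exact if_neg fun h => huv (Monotone.eq_of_sum_single_eq (hmono u hu) hv h)

end MvPolynomial

theorem exists_sum_mul_prod_ne_zero {σ R : Type*} [Fintype σ] [LinearOrder σ] [CommRing R]
    [IsDomain R] {d : ℕ} (hd : d ≤ Cardinal.mk R) {c : (Fin d → σ) → R}
    (hmono : ∀ u, c u ≠ 0 → Monotone u) (hne : ∃ u, c u ≠ 0) :
    ∃ a : σ → R, ∑ u, c u * ∏ j, a (u j) ≠ 0 := by
  obtain ⟨v, hv⟩ := hne
  have hP : (∑ u, C (c u) * ∏ j, X (u j) : MvPolynomial σ R) ≠ 0 := fun h0 => hv <| by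
    rw [← coeff_sum_C_mul_prod_X_of_monotone hmono (hmono v hv), h0, coeff_zero]
  by_contra! hzero
  exact hP ((isHomogeneous_sum_C_mul_prod_X c).eq_zero_of_forall_eval_eq_zero_of_le_card
    (fun a => by simpa [map_prod] using hzero a) hd)

theorem exists_diagonal_substitution_general {p n k d : ℕ} [Fact p.Prime] (hd : d < p)
    (B : MultilinearMap (ZMod p) (fun _ : Fin d => (Fin n → ZMod p)) (ZMod p))
    (c : (Fin d → Fin k) → ZMod p)
    (hmono : ∀ u, c u ≠ 0 → Monotone u)
    (hne : ∃ u, c u ≠ 0) :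
    ∃ (a : Fin k → ZMod p) (α : ZMod p), α ≠ 0 ∧
      ∀ w : Fin n → ZMod p,
        (∑ u : Fin d → Fin k, c u * B (fun j => a (u j) • w)) =
          α * B (fun _ => w) := by
  have hcard : (d : Cardinal) ≤ Cardinal.mk (ZMod p) := by
    rw [Cardinal.mk_fintype, ZMod.card]
    exact_mod_cast hd.le
  obtain ⟨a, ha⟩ := exists_sum_mul_prod_ne_zero hcard hmono hne
  refine ⟨a, _, ha, fun w => ?_⟩
  simp only [B.map_smul_univ, smul_eq_mul, Finset.sum_mul, mul_assoc]

/-- Let `B` be a symmetric `d`-multilinear form on `V = 𝔽_p^n` with `d < p`, and let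
`Q(x₁,…,x_k) = ∑_{u ∈ U^d} c_u · B(x_{u₁},…,x_{u_d})` be a linear combination over
nondecreasing tuples `u ∈ [k]^d` with not all coefficients zero. Then there are
`a₁,…,a_k ∈ 𝔽_p` and `α ≠ 0` with `Q(a₁w,…,a_kw) = α·B(w,…,w)` for all `w`. -/
theorem exists_diagonal_substitution {p n k d : ℕ} [Fact p.Prime] (hd : d < p)
    (B : MultilinearMap (ZMod p) (fun _ : Fin d => (Fin n → ZMod p)) (ZMod p))
    (hsymm : ∀ (σ : Equiv.Perm (Fin d)) (v : Fin d → Fin n → ZMod p),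
      B (v ∘ σ) = B v)
    (c : (Fin d → Fin k) → ZMod p)
    (hmono : ∀ u, c u ≠ 0 → Monotone u)
    (hne : ∃ u, c u ≠ 0) :
    ∃ (a : Fin k → ZMod p) (α : ZMod p), α ≠ 0 ∧
      ∀ w : Fin n → ZMod p,
        (∑ u : Fin d → Fin k, c u * B (fun j => a (u j) • w)) =
          α * B (fun _ => w) :=
  exists_diagonal_substitution_general hd B c hmono hne
end

section
/- Let p be prime, t < p, and P₁,…,P_m homogeneous polynomials on 𝔽_p^n of degree t with P₁ not identically zero. Let L₁,…,L_m be linear forms in k variables with L_i(x) = Σ_j λ_{i,j} x_j. If P₁(L₁(x)) + … + P_m(L_m(x)) ≡ 0 as a function of x ∈ (𝔽_p^n)^k, then the tensor powers satisfy a nontrivial linear relation Σ_{i=1}^m α_i L_i^{⊗t} = 0 with α₁ ≠ 0; in particular L₁^{⊗t} lies in the span of L₂^{⊗t},…,L_m^{⊗t}. -/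
/-- The `t`-th tensor power of a linear form `L ∈ 𝔽_p^k`, with entries
`∏_{j=1}^t λ_{i_j}` indexed by `(i₁,…,i_t) ∈ [k]^t`. -/
def tensorPow {p k : ℕ} (t : ℕ) (L : Fin k → ZMod p) : (Fin t → Fin k) → ZMod p :=
  fun idx => ∏ j : Fin t, L (idx j)

/-!
Pick `z` with `P₁(z) ≠ 0` (a nonzero homogeneous polynomial of degree `t < p` does not vanish
on `𝔽_p^n`) and put `αᵢ = Pᵢ(z)`. Substituting `x_j = y_j z` and using homogeneity turns the
identity into `∑ αᵢ ⟨Lᵢ, y⟩^t = 0` for all `y ∈ 𝔽_p^k`, so, again because `t < p`, the polynomial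
`∑ αᵢ (∑ⱼ λᵢⱼ Xⱼ)^t` is zero. Differentiating it along `X_{i₁}, …, X_{i_t}` yields
`t! ∑ αᵢ ∏ₛ λ_{i,iₛ} = 0`, and `t!` is invertible mod `p`.
-/

open MvPolynomial

namespace MvPolynomial

variable {R σ : Type*} [CommSemiring R]

theorem IsHomogeneous.eval_smul {φ : MvPolynomial σ R} {n : ℕ} (hφ : φ.IsHomogeneous n)
    (c : R) (z : σ → R) : eval (c • z) φ = c ^ n * eval z φ := by
  rw [eval_eq, eval_eq, Finset.mul_sum]
  refine Finset.sum_congr rfl fun d hd => ?_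
  have hd : d.degree = n := by
    rw [Finsupp.degree_eq_weight_one]; exact hφ (mem_support_iff.mp hd)
  simp only [Pi.smul_apply, smul_eq_mul, mul_pow, Finset.prod_mul_distrib,
    Finset.prod_pow_eq_pow_sum, ← Finsupp.degree_apply, hd]
  ring

section LinearForm

variable [Fintype σ]

noncomputable def linearForm (c : σ → R) : MvPolynomial σ R :=
  ∑ j, C (c j) * X j

theorem eval_linearForm (c y : σ → R) : eval y (linearForm c) = ∑ j, c j * y j := by
  simp [linearForm]

theorem isHomogeneous_linearForm (c : σ → R) : (linearForm c).IsHomogeneous 1 :=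
  IsHomogeneous.sum _ _ _ fun j _ => isHomogeneous_C_mul_X (c j) j

theorem pderiv_linearForm [DecidableEq σ] (c : σ → R) (j : σ) :
    pderiv j (linearForm c) = C (c j) := by
  simp [linearForm, pderiv_X, Pi.single_apply]

end LinearForm

noncomputable def iteratedPDeriv : {t : ℕ} → (Fin t → σ) → Module.End R (MvPolynomial σ R)
  | 0, _ => 1
  | _ + 1, idx => iteratedPDeriv (Fin.tail idx) * (pderiv (idx 0)).toLinearMap

theorem iteratedPDeriv_succ_apply {t : ℕ} (idx : Fin (t + 1) → σ) (φ : MvPolynomial σ R) :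
    iteratedPDeriv idx φ = iteratedPDeriv (Fin.tail idx) (pderiv (idx 0) φ) :=
  rfl

theorem iteratedPDeriv_linearForm_pow [Fintype σ] (c : σ → R) {t : ℕ} (idx : Fin t → σ) :
    iteratedPDeriv idx (linearForm c ^ t) = C (t.factorial * ∏ s, c (idx s)) := by
  classical
  induction t with
  | zero => simp [iteratedPDeriv]
  | succ t ih =>
    have hderiv : pderiv (idx 0) (linearForm c ^ (t + 1))
        = ((t + 1 : R) * c (idx 0)) • linearForm c ^ t := by
      rw [pderiv_pow, pderiv_linearForm, smul_eq_C_mul, C_mul, map_add, map_natCast, map_one,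
        Nat.add_sub_cancel]
      push_cast
      ring
    rw [iteratedPDeriv_succ_apply, hderiv, map_smul, ih, smul_eq_C_mul, ← C_mul,
      Fin.prod_univ_succ, Nat.factorial_succ]
    push_cast
    congr 1
    simp only [Fin.tail]
    ring

end MvPolynomial

section Relation

open Cardinal

variable {R ι σ : Type*} [CommRing R] [Fintype ι] [Fintype σ]

theorem sum_mul_prod_eq_zero_of_sum_smul_linearForm_pow_eq_zero {t : ℕ}
    (ht : IsUnit (t.factorial : R)) (α : ι → R) (c : ι → σ → R)
    (h : ∑ i, α i • linearForm (c i) ^ t = 0) (idx : Fin t → σ) :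
    ∑ i, α i * ∏ s, c i (idx s) = 0 := by
  have hderiv := congr_arg (iteratedPDeriv idx) h
  rw [map_sum, map_zero] at hderiv
  simp only [map_smul, iteratedPDeriv_linearForm_pow] at hderiv
  simp only [smul_eq_C_mul, ← C_mul] at hderiv
  rw [← map_sum, C_eq_zero] at hderiv
  apply ht.mul_right_eq_zero.mp
  simpa only [Finset.mul_sum, mul_left_comm] using hderiv

theorem sum_smul_linearForm_pow_eq_zero [IsDomain R] {τ : Type*} {t : ℕ} (ht : t ≤ #R)
    (L : ι → σ → R) (P : ι → MvPolynomial τ R) (hhom : ∀ i, (P i).IsHomogeneous t)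
    (hvanish : ∀ x : σ → τ → R, ∑ i, eval (fun v => ∑ j, L i j * x j v) (P i) = 0)
    (z : τ → R) : ∑ i, eval z (P i) • linearForm (L i) ^ t = 0 := by
  refine IsHomogeneous.eq_zero_of_forall_eval_eq_zero_of_le_card ?_ (fun y => ?_) ht
  · refine IsHomogeneous.sum _ _ _ fun i _ => ?_
    simpa only [smul_eq_C_mul, one_mul] using ((isHomogeneous_linearForm (L i)).pow t).C_mul _
  · rw [← hvanish fun j v => y j * z v, map_sum]
    refine Finset.sum_congr rfl fun i _ => ?_
    have hpoint : (fun v => ∑ j, L i j * (y j * z v)) = (∑ j, L i j * y j) • z := by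
      ext v; simp only [Pi.smul_apply, smul_eq_mul, Finset.sum_mul, mul_assoc]
    rw [hpoint, (hhom i).eval_smul, smul_eval, eval_pow, eval_linearForm, mul_comm]

end Relation

/-- If `P₁,…,P_m` are homogeneous polynomials of degree `t < p` on `𝔽_p^n` with `P₁ ≠ 0`
and `∑ P_i(L_i(x)) ≡ 0` on `(𝔽_p^n)^k`, then there is a nontrivial linear relation
`∑ α_i L_i^{⊗t} = 0` with `α₁ ≠ 0`; in particular `L₁^{⊗t}` lies in the span of the
other tensor powers. -/
theorem tensorPow_dependent_of_vanishing {p k n m t : ℕ} [Fact p.Prime] (ht : t < p)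
    (L : Fin (m + 1) → Fin k → ZMod p)
    (P : Fin (m + 1) → MvPolynomial (Fin n) (ZMod p))
    (hhom : ∀ i, (P i).IsHomogeneous t) (hP0 : P 0 ≠ 0)
    (hvanish : ∀ x : Fin k → Fin n → ZMod p,
      (∑ i : Fin (m + 1),
        MvPolynomial.eval (fun v : Fin n => ∑ j : Fin k, L i j * x j v) (P i)) = 0) :
    ∃ α : Fin (m + 1) → ZMod p, α 0 ≠ 0 ∧
      (∑ i : Fin (m + 1), α i • tensorPow t (L i)) = 0 := by
  have hcard : (t : Cardinal) ≤ Cardinal.mk (ZMod p) := by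
    rw [Cardinal.mk_fintype, ZMod.card]
    exact_mod_cast ht.le
  obtain ⟨z, hz⟩ : ∃ z, eval z (P 0) ≠ 0 := by
    by_contra! h
    exact hP0 ((hhom 0).eq_zero_of_forall_eval_eq_zero_of_le_card h hcard)
  refine ⟨fun i => eval z (P i), hz, funext fun idx => ?_⟩
  simpa [tensorPow] using sum_mul_prod_eq_zero_of_sum_smul_linearForm_pow_eq_zero
    ((IsUnit.natCast_factorial_iff_of_charP p).mpr ht) _ L
    (sum_smul_linearForm_pow_eq_zero hcard L P hhom hvanish z) idx
end

section
/- If d+1 ≤ t < p and L₁,…,L_m are linear forms in k variables over 𝔽_p such that L₁^{⊗t} is linearly dependent on L₂^{⊗t},…,L_m^{⊗t}, then L₁^{⊗(d+1)} is linearly dependent on L₂^{⊗(d+1)},…,L_m^{⊗(d+1)}. -/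
/-- Evaluating the `t`-th tensor power on an index extended by a constant `j₀`
splits as a product. -/
lemma tensorPow_ext {p k : ℕ} {d t : ℕ} (h : d + 1 ≤ t) (L : Fin k → ZMod p)
    (idx : Fin (d + 1) → Fin k) (j₀ : Fin k) :
    tensorPow t L (fun j => Fin.append idx (fun _ : Fin (t - (d+1)) => j₀)
        (Fin.cast (by omega) j)) =
      tensorPow (d + 1) L idx * (L j₀) ^ (t - (d + 1)) := by
  have e : t = (d + 1) + (t - (d + 1)) := by omega
  have h1 : tensorPow t L (fun j => Fin.append idx (fun _ : Fin (t - (d+1)) => j₀)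
        (Fin.cast (by omega) j)) =
      ∏ j : Fin ((d + 1) + (t - (d + 1))), L (Fin.append idx (fun _ => j₀) j) :=
    Fintype.prod_equiv (finCongr e) _ _ (fun j => rfl)
  rw [h1, Fin.prod_univ_add]
  simp [tensorPow, Fin.append_left, Fin.append_right]

/-- If `d+1 ≤ t < p` and `L₁^{⊗t}` is linearly dependent on `L₂^{⊗t},…,L_m^{⊗t}`, then
`L₁^{⊗(d+1)}` is linearly dependent on `L₂^{⊗(d+1)},…,L_m^{⊗(d+1)}`. -/
theorem tensorPow_dependence_descends {p k m d t : ℕ} [Fact p.Prime]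
    (hdt : d + 1 ≤ t) (htp : t < p)
    (L : Fin (m + 1) → Fin k → ZMod p)
    (hdep : tensorPow t (L 0) ∈
      Submodule.span (ZMod p) (Set.range (fun i : Fin m => tensorPow t (L i.succ)))) :
    tensorPow (d + 1) (L 0) ∈
      Submodule.span (ZMod p)
        (Set.range (fun i : Fin m => tensorPow (d + 1) (L i.succ))) := by
  by_cases h0 : L 0 = 0
  · have : tensorPow (d + 1) (L 0) = 0 := by
      funext idx
      simp [tensorPow, h0]
    rw [this]
    exact Submodule.zero_mem _
  · obtain ⟨j₀, hj₀⟩ : ∃ j₀, L 0 j₀ ≠ 0 := by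
      by_contra hc
      push_neg at hc
      exact h0 (funext hc)
    obtain ⟨c, hc⟩ := (Submodule.mem_span_range_iff_exists_fun (ZMod p)).mp hdep
    set s := t - (d + 1) with hs
    set u : ZMod p := (L 0 j₀) ^ s with hu
    have hune : u ≠ 0 := pow_ne_zero _ hj₀
    refine (Submodule.mem_span_range_iff_exists_fun (ZMod p)).mpr
      ⟨fun i => c i * (L i.succ j₀) ^ s * u⁻¹, ?_⟩
    funext idx
    have key := congrFun hc (fun j => Fin.append idx (fun _ : Fin (t - (d+1)) => j₀)
        (Fin.cast (by omega) j))
    simp only [Finset.sum_apply, Pi.smul_apply, smul_eq_mul] at key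
    have key2 : (∑ i : Fin m, c i * (tensorPow (d+1) (L i.succ) idx * (L i.succ j₀) ^ s))
        = tensorPow (d+1) (L 0) idx * u := by
      rw [← tensorPow_ext hdt (L 0) idx j₀, ← key]
      exact Finset.sum_congr rfl fun i _ => by rw [tensorPow_ext hdt (L i.succ) idx j₀]
    simp only [Finset.sum_apply, Pi.smul_apply, smul_eq_mul]
    have : (∑ i : Fin m, c i * (L i.succ j₀) ^ s * u⁻¹ * tensorPow (d+1) (L i.succ) idx)
        = (∑ i : Fin m, c i * (tensorPow (d+1) (L i.succ) idx * (L i.succ j₀) ^ s)) * u⁻¹ := by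
      rw [Finset.sum_mul]
      exact Finset.sum_congr rfl fun i _ => by ring
    rw [this, key2, mul_assoc, mul_inv_cancel₀ hune, mul_one]
end

section
/- Let {L₁,…,L_m} be a homogeneous system of linear forms over 𝔽_p (its distribution is invariant under adding a common constant shift), and let P₁,…,P_k be polynomials of degrees d₁,…,d_k < p whose top-degree homogeneous parts P_i^{(d_i)} are linearly independent over 𝔽_p. Then for coefficients λ_{i,j} ∈ 𝔽_p, Σ_{i,j} λ_{i,j} P_i(L_j(x)) ≡ 0 if and only if Σ_{i,j} λ_{i,j} P_i^{(d_i)}(L_j(x)) ≡ 0. -/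
open Finset

/-- A system of linear forms is homogeneous if the tuple `(L₁(X),…,L_m(X))` for uniform
`X ∈ (𝔽_p^n)^k` has the same distribution as `(L₁(X)+c,…,L_m(X)+c)` for every `n` and
every constant shift `c ∈ 𝔽_p^n` (expressed here as equality of counts of preimages). -/
def HomogeneousSystem {p k m : ℕ} [NeZero p] (L : Fin m → Fin k → ZMod p) : Prop :=
  ∀ (n : ℕ) (c : Fin n → ZMod p) (v : Fin m → Fin n → ZMod p),
    (Finset.univ.filter (fun x : Fin k → Fin n → ZMod p =>
      ∀ i, (∑ j : Fin k, L i j • x j) = v i)).card =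
    (Finset.univ.filter (fun x : Fin k → Fin n → ZMod p =>
      ∀ i, ((∑ j : Fin k, L i j • x j) + c) = v i)).card

namespace NonhomAux

open MvPolynomial

variable {p : ℕ} [Fact p.Prime]

/-- A polynomial of degree `< p` in one variable over `ZMod p` vanishing everywhere has
all coefficients zero. -/
lemma coeffs_zero {d : ℕ} (hd : d < p) (a : ℕ → ZMod p)
    (h : ∀ t : ZMod p, ∑ i ∈ Finset.range (d + 1), a i * t ^ i = 0) :
    ∀ i ≤ d, a i = 0 := by
  have : NeZero p := ⟨(Fact.out : p.Prime).ne_zero⟩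
  have hq : (∑ i ∈ Finset.range (d + 1), Polynomial.C (a i) * Polynomial.X ^ i) = 0 := by
    apply Polynomial.eq_zero_of_natDegree_lt_card_of_eval_eq_zero _
      (f := (id : ZMod p → ZMod p)) Function.injective_id
    · intro t
      rw [Polynomial.eval_finset_sum]
      simpa using h t
    · calc (∑ i ∈ Finset.range (d + 1), Polynomial.C (a i) * Polynomial.X ^ i).natDegree
          ≤ d := Polynomial.natDegree_sum_le_of_forall_le _ _ (fun i hi => by
            refine le_trans (Polynomial.natDegree_C_mul_le _ _) ?_
            rw [Polynomial.natDegree_X_pow]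
            exact Nat.lt_succ_iff.mp (Finset.mem_range.mp hi))
        _ < Fintype.card (ZMod p) := by rw [ZMod.card]; exact hd
  intro i hi
  have h2 := congrArg (fun q => Polynomial.coeff q i) hq
  simp only [Polynomial.finset_sum_coeff, Polynomial.coeff_C_mul, Polynomial.coeff_X_pow,
    Polynomial.coeff_zero, mul_ite, mul_one, mul_zero] at h2
  rwa [Finset.sum_ite_eq (Finset.range (d + 1)) i a, if_pos (Finset.mem_range.mpr (by omega))]
    at h2

/-- A multivariate polynomial over `ZMod p` of total degree `< p` vanishing at all points
is zero. -/
lemma mv_eq_zero {n : ℕ} (Q : MvPolynomial (Fin n) (ZMod p))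
    (hdeg : Q.totalDegree < p) (h : ∀ y : Fin n → ZMod p, MvPolynomial.eval y Q = 0) :
    Q = 0 := by
  apply MvPolynomial.eq_zero_of_eval_eq_zero (Fin n) (ZMod p) Q h
  rw [MvPolynomial.mem_restrictDegree]
  intro s hs i
  calc s i ≤ Q.degreeOf i := MvPolynomial.degreeOf_le_iff.mp le_rfl s hs
    _ ≤ Q.totalDegree := MvPolynomial.degreeOf_le_totalDegree Q i
    _ ≤ Fintype.card (ZMod p) - 1 := by rw [ZMod.card]; omega

lemma eval_smul_homog {n d : ℕ} {R : MvPolynomial (Fin n) (ZMod p)} (hR : R.IsHomogeneous d)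
    (s : ZMod p) (y : Fin n → ZMod p) :
    MvPolynomial.eval (s • y) R = s ^ d * MvPolynomial.eval y R := by
  rw [MvPolynomial.eval_eq', MvPolynomial.eval_eq', Finset.mul_sum]
  refine Finset.sum_congr rfl fun α hα => ?_
  have hdsum : ∑ i, α i = d := by
    have h1 := hR (MvPolynomial.mem_support_iff.mp hα)
    have h2 : α.degree = ∑ i, α i := by
      rw [Finsupp.degree]
      exact Finset.sum_subset (Finset.subset_univ _)
        (fun i _ hi => Finsupp.notMem_support_iff.mp hi)
    rw [← h2]
    rw [Finsupp.degree_eq_weight_one] at h2 ⊢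
    exact h1
  calc MvPolynomial.coeff α R * ∏ i, (s • y) i ^ α i
      = MvPolynomial.coeff α R * ((∏ i, s ^ α i) * ∏ i, y i ^ α i) := by
        rw [← Finset.prod_mul_distrib]
        refine congrArg _ (Finset.prod_congr rfl fun i _ => ?_)
        rw [Pi.smul_apply, smul_eq_mul, mul_pow]
    _ = s ^ d * (MvPolynomial.coeff α R * ∏ i, y i ^ α i) := by
        rw [Finset.prod_pow_eq_pow_sum, hdsum]
        ring

lemma choose_ne_zero {N i : ℕ} (hi : i ≤ N) (hN : N < p) :
    (N.choose i : ZMod p) ≠ 0 := by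
  have : NeZero p := ⟨(Fact.out : p.Prime).ne_zero⟩
  rw [Ne, ZMod.natCast_eq_zero_iff]
  intro hdvd
  have h1 : N.choose i ∣ Nat.factorial N := ⟨Nat.factorial i * Nat.factorial (N - i), by
    rw [← mul_assoc, Nat.choose_mul_factorial_mul_factorial hi]⟩
  have h2 : p ∣ Nat.factorial N := hdvd.trans h1
  have := (Nat.Prime.dvd_factorial (Fact.out : p.Prime)).mp h2
  omega

lemma extract {m N : ℕ} (hN : N < p) (w a b R : Fin m → ZMod p)
    (h : ∀ t : ZMod p, ∑ j, w j * ((a j + t * b j) ^ N * R j) = 0)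
    {e₀ e₁ : ℕ} (he : e₀ + e₁ = N) :
    ∑ j, w j * (a j ^ e₀ * b j ^ e₁ * R j) = 0 := by
  set A : ℕ → ZMod p :=
    fun q => (N.choose (N - q) : ZMod p) * ∑ j, w j * (a j ^ (N - q) * b j ^ q * R j) with hA
  have key : ∀ t : ZMod p, ∑ q ∈ Finset.range (N + 1), A q * t ^ q = 0 := by
    intro t
    calc ∑ q ∈ Finset.range (N + 1), A q * t ^ q
        = ∑ i ∈ Finset.range (N + 1), A (N - i) * t ^ (N - i) :=
          (Finset.sum_range_reflect (fun q => A q * t ^ q) (N + 1)).symm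
      _ = ∑ i ∈ Finset.range (N + 1),
            ∑ j, w j * (a j ^ i * (t * b j) ^ (N - i) * (N.choose i : ZMod p) * R j) := by
          refine Finset.sum_congr rfl fun i hi => ?_
          have hi' : i ≤ N := Nat.lt_succ_iff.mp (Finset.mem_range.mp hi)
          rw [hA]
          dsimp only
          rw [Nat.sub_sub_self hi', Finset.mul_sum, Finset.sum_mul]
          refine Finset.sum_congr rfl fun j _ => ?_
          rw [mul_pow]
          ring
      _ = ∑ j, w j * ((a j + t * b j) ^ N * R j) := by
          rw [Finset.sum_comm]
          refine Finset.sum_congr rfl fun j _ => ?_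
          rw [add_pow, Finset.sum_mul, Finset.mul_sum]
          try exact Finset.sum_congr rfl fun i _ => by ring
      _ = 0 := h t
  have hA1 := coeffs_zero hN A key e₁ (by omega)
  rw [hA] at hA1
  dsimp only at hA1
  have he₀ : N - e₁ = e₀ := by omega
  rw [he₀] at hA1
  rcases mul_eq_zero.mp hA1 with h' | h'
  · exact absurd h' (choose_ne_zero (by omega) hN)
  · exact h'

lemma mom_of_shift {m N : ℕ} (hN : N < p) (w a : Fin m → ZMod p)
    (h : ∀ t : ZMod p, ∑ j, w j * (a j + t) ^ N = 0) :
    ∀ e ≤ N, ∑ j, w j * a j ^ e = 0 := by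
  intro e he
  have := extract hN w a (fun _ => 1) (fun _ => 1)
    (fun t => by simpa using h t) (show e + (N - e) = N by omega)
  simpa using this

lemma shift_of_mom {m N : ℕ} (w a : Fin m → ZMod p)
    (h : ∀ e ≤ N, ∑ j, w j * a j ^ e = 0) (t : ZMod p) :
    ∑ j, w j * (a j + t) ^ N = 0 := by
  calc ∑ j, w j * (a j + t) ^ N
      = ∑ j, ∑ i ∈ Finset.range (N + 1),
          w j * a j ^ i * (t ^ (N - i) * (N.choose i : ZMod p)) := by
        refine Finset.sum_congr rfl fun j _ => ?_
        rw [add_pow, Finset.mul_sum]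
        exact Finset.sum_congr rfl fun i _ => by ring
    _ = ∑ i ∈ Finset.range (N + 1),
          (∑ j, w j * a j ^ i) * (t ^ (N - i) * (N.choose i : ZMod p)) := by
        rw [Finset.sum_comm]
        exact Finset.sum_congr rfl fun i _ => (Finset.sum_mul _ _ _).symm
    _ = 0 := by
        refine Finset.sum_eq_zero fun i hi => ?_
        rw [h i (Nat.lt_succ_iff.mp (Finset.mem_range.mp hi)), zero_mul]

lemma eval_smul_expand {n M : ℕ} (Q : MvPolynomial (Fin n) (ZMod p)) (hQ : Q.totalDegree < M)
    (s : ZMod p) (y : Fin n → ZMod p) :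
    MvPolynomial.eval (s • y) Q
      = ∑ d ∈ Finset.range M, s ^ d * MvPolynomial.eval y (homogeneousComponent d Q) := by
  conv_lhs => rw [← MvPolynomial.sum_homogeneousComponent Q]
  rw [map_sum]
  have h1 : ∑ d ∈ Finset.range (Q.totalDegree + 1),
      MvPolynomial.eval (s • y) (homogeneousComponent d Q)
      = ∑ d ∈ Finset.range (Q.totalDegree + 1),
          s ^ d * MvPolynomial.eval y (homogeneousComponent d Q) :=
    Finset.sum_congr rfl fun d _ =>
      eval_smul_homog (homogeneousComponent_isHomogeneous d Q) s y
  rw [h1]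
  refine Finset.sum_subset (Finset.range_subset_range.mpr (by omega)) (fun d hd hnd => ?_)
  have h0 : homogeneousComponent d Q = 0 := homogeneousComponent_eq_zero _ _ (by
    simp only [Finset.mem_range] at hd hnd
    omega)
  rw [h0, map_zero, mul_zero]

lemma totalDegree_sum_le' {n : ℕ} {ι : Type*} (s : Finset ι)
    (f : ι → MvPolynomial (Fin n) (ZMod p)) {b : ℕ}
    (h : ∀ i ∈ s, (f i).totalDegree ≤ b) : (∑ i ∈ s, f i).totalDegree ≤ b :=
  (MvPolynomial.totalDegree_finset_sum s f).trans (Finset.sup_le h)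


variable {n k m : ℕ}

/-- The shift trick: a vanishing sum over a homogeneous system stays vanishing
after a common shift. -/
lemma shift (L : Fin m → Fin k → ZMod p) (hL : _root_.HomogeneousSystem L)
    (f : Fin m → (Fin n → ZMod p) → ZMod p)
    (h : ∀ x : Fin k → Fin n → ZMod p, ∑ j, f j (fun v => ∑ j', L j j' * x j' v) = 0)
    (x : Fin k → Fin n → ZMod p) (c : Fin n → ZMod p) :
    ∑ j, f j (fun v => (∑ j', L j j' * x j' v) + c v) = 0 := by
  classical
  have : NeZero p := ⟨(Fact.out : p.Prime).ne_zero⟩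
  set v : Fin m → Fin n → ZMod p := fun j => fun v' => (∑ j', L j j' * x j' v') + c v' with hv
  have hmem : x ∈ Finset.univ.filter (fun x : Fin k → Fin n → ZMod p =>
      ∀ i, ((∑ j : Fin k, L i j • x j) + c) = v i) := by
    simp only [Finset.mem_filter, Finset.mem_univ, true_and]
    intro i
    funext v'
    simp [hv, Finset.sum_apply, Pi.smul_apply, smul_eq_mul]
  have hpos : 0 < (Finset.univ.filter (fun x : Fin k → Fin n → ZMod p =>
      ∀ i, (∑ j : Fin k, L i j • x j) = v i)).card := by
    rw [hL n c v]
    exact Finset.card_pos.mpr ⟨x, hmem⟩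
  obtain ⟨x₁, hx₁⟩ := Finset.card_pos.mp hpos
  simp only [Finset.mem_filter, Finset.mem_univ, true_and] at hx₁
  have hvj : ∀ j, v j = fun v' => ∑ j', L j j' * x₁ j' v' := by
    intro j
    rw [← hx₁ j]
    funext v'
    simp [Finset.sum_apply, Pi.smul_apply, smul_eq_mul]
  calc ∑ j, f j (v j) = ∑ j, f j (fun v' => ∑ j', L j j' * x₁ j' v') :=
        Finset.sum_congr rfl fun j _ => by rw [hvj j]
    _ = 0 := h x₁

/-- Products of moments vanish. -/
lemma mom_prod (L : Fin m → Fin k → ZMod p) (w : Fin m → ZMod p) {E : ℕ} (hE : E < p)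
    (hmom : ∀ e ≤ E, ∀ u : Fin k → ZMod p, ∑ j, w j * (∑ j', L j j' * u j') ^ e = 0) :
    ∀ (s : ℕ) (u : Fin s → Fin k → ZMod p) (e : Fin s → ℕ), (∑ r, e r) ≤ E →
      ∑ j, w j * ∏ r, (∑ j', L j j' * u r j') ^ e r = 0 := by
  intro s
  induction s with
  | zero =>
    intro u e _
    simpa using hmom 0 (Nat.zero_le E) (fun _ => 0)
  | succ s ih =>
    intro u e he
    cases s with
    | zero =>
      have h1 := hmom (e 0) (by simpa using he) (u 0)
      simpa [Fin.prod_univ_one] using h1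
    | succ s' =>
      set a : Fin m → ZMod p := fun j => ∑ j', L j j' * u 0 j' with ha
      set b : Fin m → ZMod p := fun j => ∑ j', L j j' * u 1 j' with hb
      set Rst : Fin m → ZMod p :=
        fun j => ∏ r : Fin s', (∑ j', L j j' * u r.succ.succ j') ^ e r.succ.succ with hR
      have hle : e 0 + e 1 ≤ E := by
        rw [Fin.sum_univ_succ, Fin.sum_univ_succ] at he
        simp only [Fin.succ_zero_eq_one] at he
        omega
      have key : ∀ t : ZMod p, ∑ j, w j * ((a j + t * b j) ^ (e 0 + e 1) * Rst j) = 0 := by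
        intro t
        have hih := ih (Fin.cons (fun j' => u 0 j' + t * u 1 j') (fun r => u r.succ.succ))
          (Fin.cons (e 0 + e 1) (fun r => e r.succ.succ)) ?hsum
        case hsum =>
          rw [Fin.sum_univ_succ]
          simp only [Fin.cons_zero, Fin.cons_succ]
          rw [Fin.sum_univ_succ, Fin.sum_univ_succ] at he
          simp only [Fin.succ_zero_eq_one] at he
          omega
        refine Eq.trans ?_ hih
        refine Finset.sum_congr rfl fun j _ => ?_
        congr 1
        rw [Fin.prod_univ_succ]
        simp only [Fin.cons_zero, Fin.cons_succ]
        congr 2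
        rw [ha, hb]
        dsimp only
        rw [Finset.mul_sum, ← Finset.sum_add_distrib]
        exact Finset.sum_congr rfl fun j' _ => by ring
      have hex := extract (lt_of_le_of_lt hle hE) w a b Rst key
        (rfl : e 0 + e 1 = e 0 + e 1)
      refine Eq.trans ?_ hex
      refine Finset.sum_congr rfl fun j _ => ?_
      rw [Fin.prod_univ_succ, Fin.prod_univ_succ]
      simp only [Fin.succ_zero_eq_one]
      rw [ha, hb, hR]
      dsimp only
      ring

lemma row_identity (L : Fin m → Fin k → ZMod p) (w : Fin m → ZMod p) {E : ℕ} (hE : E < p)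
    (hmom : ∀ e ≤ E, ∀ u : Fin k → ZMod p, ∑ j, w j * (∑ j', L j j' * u j') ^ e = 0)
    (R : MvPolynomial (Fin n) (ZMod p)) (hR : R.totalDegree ≤ E)
    (x : Fin k → Fin n → ZMod p) :
    ∑ j, w j * MvPolynomial.eval (fun v => ∑ j', L j j' * x j' v) R = 0 := by
  calc ∑ j, w j * MvPolynomial.eval (fun v => ∑ j', L j j' * x j' v) R
      = ∑ j, ∑ α ∈ R.support, MvPolynomial.coeff α R
          * (w j * ∏ v, (∑ j', L j j' * x j' v) ^ α v) := by
        refine Finset.sum_congr rfl fun j _ => ?_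
        rw [MvPolynomial.eval_eq', Finset.mul_sum]
        exact Finset.sum_congr rfl fun α _ => by ring
    _ = ∑ α ∈ R.support, MvPolynomial.coeff α R
          * ∑ j, w j * ∏ v, (∑ j', L j j' * x j' v) ^ α v := by
        rw [Finset.sum_comm]
        exact Finset.sum_congr rfl fun α _ => by rw [Finset.mul_sum]
    _ = 0 := by
        refine Finset.sum_eq_zero fun α hα => ?_
        have hsum : (∑ v, α v) ≤ E := by
          have h1 : (α.sum fun _ e => e) = ∑ v, α v := by
            rw [Finsupp.sum]
            exact Finset.sum_subset (Finset.subset_univ _)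
              (fun i _ hi => Finsupp.notMem_support_iff.mp hi)
          have h2 := MvPolynomial.le_totalDegree hα
          omega
        have h0 : ∑ j, w j * ∏ v, (∑ j', L j j' * x j' v) ^ α v = 0 := by
          have := mom_prod L w hE hmom n (fun v j' => x j' v) (fun v => α v) hsum
          simpa using this
        rw [h0, mul_zero]

lemma rank1 {K : ℕ} (L : Fin m → Fin k → ZMod p) (hL : _root_.HomogeneousSystem L)
    (lam : Fin K → Fin m → ZMod p) (R : Fin K → MvPolynomial (Fin n) (ZMod p))
    (h : ∀ x : Fin k → Fin n → ZMod p,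
      ∑ i, ∑ j, lam i j * MvPolynomial.eval (fun v => ∑ j', L j j' * x j' v) (R i) = 0)
    (u : Fin k → ZMod p) (t : ZMod p) (y : Fin n → ZMod p) :
    ∑ i, ∑ j, lam i j
        * MvPolynomial.eval (((∑ j', L j j' * u j') + t) • y) (R i) = 0 := by
  have h' : ∀ x : Fin k → Fin n → ZMod p,
      ∑ j, (fun (j : Fin m) (wv : Fin n → ZMod p) =>
        ∑ i, lam i j * MvPolynomial.eval wv (R i)) j (fun v => ∑ j', L j j' * x j' v) = 0 := by
    intro x
    have hx := h x
    rw [Finset.sum_comm] at hx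
    exact hx
  have hs := shift L hL (fun (j : Fin m) (wv : Fin n → ZMod p) =>
      ∑ i, lam i j * MvPolynomial.eval wv (R i)) h' (fun j' => fun v => u j' * y v)
      (fun v => t * y v)
  have hpt : ∀ j : Fin m, (((∑ j', L j j' * u j') + t) • y)
      = (fun v => (∑ j', L j j' * (u j' * y v)) + t * y v) := by
    intro j
    funext v
    simp only [Pi.smul_apply, smul_eq_mul, add_mul, Finset.sum_mul]
    congr 1
    exact Finset.sum_congr rfl fun j' _ => by ring
  rw [Finset.sum_comm]
  refine Eq.trans (Finset.sum_congr rfl fun j _ => Finset.sum_congr rfl fun i _ => ?_) hs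
  rw [hpt j]


variable {K : ℕ}

lemma spade_of_top (L : Fin m → Fin k → ZMod p) (hL : _root_.HomogeneousSystem L)
    (D : Fin K → ℕ) (hDp : ∀ i, D i < p)
    (P : Fin K → MvPolynomial (Fin n) (ZMod p))
    (hind : LinearIndependent (ZMod p) (fun i => homogeneousComponent (D i) (P i)))
    (lam : Fin K → Fin m → ZMod p)
    (htop : ∀ x : Fin k → Fin n → ZMod p,
      ∑ i, ∑ j, lam i j * MvPolynomial.eval (fun v => ∑ j', L j j' * x j' v)
        (homogeneousComponent (D i) (P i)) = 0) :
    ∀ i, ∀ e ≤ D i, ∀ u : Fin k → ZMod p,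
      ∑ j, lam i j * (∑ j', L j j' * u j') ^ e = 0 := by
  classical
  have hp0 : 0 < p := (Fact.out : p.Prime).pos
  have hDmp : Finset.univ.sup D < p := Finset.sup_lt_iff hp0 |>.mpr fun i _ => hDp i
  have hg : ∀ (u : Fin k → ZMod p) (t : ZMod p) (i : Fin K),
      ∑ j, lam i j * ((∑ j', L j j' * u j') + t) ^ D i = 0 := by
    intro u t
    have hzero : (∑ i, (∑ j, lam i j * ((∑ j', L j j' * u j') + t) ^ D i)
        • homogeneousComponent (D i) (P i)) = 0 := by
      apply mv_eq_zero
      · refine lt_of_le_of_lt (totalDegree_sum_le' _ _ (fun i _ => ?_)) hDmp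
        refine le_trans (MvPolynomial.totalDegree_smul_le _ _) ?_
        exact le_trans (homogeneousComponent_isHomogeneous (D i) (P i)).totalDegree_le
          (Finset.le_sup (Finset.mem_univ i))
      · intro y
        rw [map_sum]
        have hr := rank1 L hL lam (fun i => homogeneousComponent (D i) (P i)) htop u t y
        refine Eq.trans ?_ hr
        refine Finset.sum_congr rfl fun i _ => ?_
        rw [MvPolynomial.smul_eq_C_mul, map_mul, MvPolynomial.eval_C, Finset.sum_mul]
        refine Finset.sum_congr rfl fun j _ => ?_
        rw [eval_smul_homog (homogeneousComponent_isHomogeneous (D i) (P i))]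
        ring
    intro i
    exact Fintype.linearIndependent_iff.mp hind _ hzero i
  intro i e he u
  exact mom_of_shift (hDp i) (lam i) _ (fun t => hg u t i) e he

lemma spade_of_full (L : Fin m → Fin k → ZMod p) (hL : _root_.HomogeneousSystem L)
    (D : Fin K → ℕ) (hDp : ∀ i, D i < p)
    (P : Fin K → MvPolynomial (Fin n) (ZMod p))
    (hdeg : ∀ i, (P i).totalDegree ≤ D i)
    (hind : LinearIndependent (ZMod p) (fun i => homogeneousComponent (D i) (P i)))
    (lam : Fin K → Fin m → ZMod p)
    (hfull : ∀ x : Fin k → Fin n → ZMod p,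
      ∑ i, ∑ j, lam i j * MvPolynomial.eval (fun v => ∑ j', L j j' * x j' v) (P i) = 0) :
    ∀ i, ∀ e ≤ D i, ∀ u : Fin k → ZMod p,
      ∑ j, lam i j * (∑ j', L j j' * u j') ^ e = 0 := by
  classical
  have hp0 : 0 < p := (Fact.out : p.Prime).pos
  set Dm := Finset.univ.sup D with hDmdef
  have hDmp : Dm < p := Finset.sup_lt_iff hp0 |>.mpr fun i _ => hDp i
  have h3 : ∀ d₀ ≤ Dm, ∀ (u : Fin k → ZMod p) (t : ZMod p),
      (∑ i, (∑ j, lam i j * ((∑ j', L j j' * u j') + t) ^ d₀)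
        • homogeneousComponent d₀ (P i)) = 0 := by
    intro d₀ hd₀ u t
    have hN : (∑ d ∈ Finset.range (Dm + 1), ∑ i,
        (∑ j, lam i j * ((∑ j', L j j' * u j') + t) ^ d)
          • homogeneousComponent d (P i)) = 0 := by
      apply mv_eq_zero
      · refine lt_of_le_of_lt (totalDegree_sum_le' _ _ (fun d hd =>
          totalDegree_sum_le' _ _ (fun i _ => ?_))) hDmp
        refine le_trans (MvPolynomial.totalDegree_smul_le _ _) ?_
        refine le_trans (homogeneousComponent_isHomogeneous d (P i)).totalDegree_le ?_
        exact Nat.lt_succ_iff.mp (Finset.mem_range.mp hd)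
      · intro y
        have hr := rank1 L hL lam P hfull u t y
        calc MvPolynomial.eval y (∑ d ∈ Finset.range (Dm + 1), ∑ i,
              (∑ j, lam i j * ((∑ j', L j j' * u j') + t) ^ d)
                • homogeneousComponent d (P i))
            = ∑ d ∈ Finset.range (Dm + 1), ∑ i, ∑ j,
                lam i j * (((∑ j', L j j' * u j') + t) ^ d
                  * MvPolynomial.eval y (homogeneousComponent d (P i))) := by
              rw [map_sum]
              refine Finset.sum_congr rfl fun d _ => ?_
              rw [map_sum]
              refine Finset.sum_congr rfl fun i _ => ?_
              rw [MvPolynomial.smul_eq_C_mul, map_mul, MvPolynomial.eval_C, Finset.sum_mul]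
              exact Finset.sum_congr rfl fun j _ => by ring
          _ = ∑ i, ∑ j, ∑ d ∈ Finset.range (Dm + 1),
                lam i j * (((∑ j', L j j' * u j') + t) ^ d
                  * MvPolynomial.eval y (homogeneousComponent d (P i))) := by
              rw [Finset.sum_comm]
              exact Finset.sum_congr rfl fun i _ => Finset.sum_comm
          _ = ∑ i, ∑ j, lam i j * MvPolynomial.eval
                ((((∑ j', L j j' * u j') + t)) • y) (P i) := by
              refine Finset.sum_congr rfl fun i _ => Finset.sum_congr rfl fun j _ => ?_
              rw [← Finset.mul_sum]
              congr 1
              rw [eval_smul_expand (P i) (Nat.lt_succ_iff.mpr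
                (le_trans (hdeg i) (Finset.le_sup (Finset.mem_univ i))))]
          _ = 0 := hr
    have hc0 := congrArg (homogeneousComponent d₀) hN
    rw [map_sum, map_zero] at hc0
    rw [Finset.sum_eq_single d₀ ?hne ?hout] at hc0
    case hne =>
      intro d _ hd
      rw [map_sum]
      refine Finset.sum_eq_zero fun i _ => ?_
      rw [map_smul, homogeneousComponent_of_mem (homogeneousComponent_mem d (P i)),
        if_neg (fun hh => hd hh.symm), smul_zero]
    case hout =>
      intro hd₀mem
      exact absurd (Finset.mem_range.mpr (by omega)) hd₀mem
    rw [map_sum] at hc0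
    refine Eq.trans ?_ hc0
    refine Finset.sum_congr rfl fun i _ => ?_
    rw [map_smul, homogeneousComponent_of_mem (homogeneousComponent_mem d₀ (P i)),
      if_pos rfl]
  have main : ∀ r : ℕ, ∀ i, Dm < D i + r →
      ∀ e ≤ D i, ∀ u : Fin k → ZMod p, ∑ j, lam i j * (∑ j', L j j' * u j') ^ e = 0 := by
    intro r
    induction r with
    | zero =>
      intro i hi
      exact absurd hi (by
        have := Finset.le_sup (f := D) (Finset.mem_univ i)
        omega)
    | succ r ih =>
      intro i hi e he u
      by_cases hcase : Dm < D i + r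
      · exact ih i hcase e he u
      · have hg : ∀ (u' : Fin k → ZMod p) (t : ZMod p),
            (∑ j, lam i j * ((∑ j', L j j' * u' j') + t) ^ (D i)) = 0 := by
          intro u' t
          have h30 := h3 (D i) (by
            have := Finset.le_sup (f := D) (Finset.mem_univ i)
            omega) u' t
          have hid : (∑ i', (if D i' = D i then
              (∑ j, lam i' j * ((∑ j', L j j' * u' j') + t) ^ (D i)) else 0)
                • homogeneousComponent (D i') (P i')) = 0 := by
            refine Eq.trans ?_ h30
            refine Finset.sum_congr rfl fun i' _ => ?_
            rcases lt_trichotomy (D i') (D i) with hlt | heq | hgt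
            · rw [if_neg (by omega), zero_smul,
                homogeneousComponent_eq_zero _ _ (lt_of_le_of_lt (hdeg i') hlt), smul_zero]
            · rw [if_pos heq, heq]
            · have hkill : (∑ j, lam i' j * ((∑ j', L j j' * u' j') + t) ^ (D i)) = 0 := by
                apply shift_of_mom
                intro e' he'
                exact ih i' (by omega) e' (by omega) u'
              rw [if_neg (by omega), zero_smul, hkill, zero_smul]
          have hli := Fintype.linearIndependent_iff.mp hind _ hid i
          rwa [if_pos rfl] at hli
        exact mom_of_shift (hDp i) (lam i) _ (fun t => hg u t) e he
  intro i
  exact main (Dm + 1) i (by omega)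

end NonhomAux

/-- For a homogeneous system of linear forms and polynomials `P_i` of degrees `d_i < p`
whose top-degree homogeneous parts are linearly independent,
`∑_{i,j} λ_{i,j} P_i(L_j(x)) ≡ 0` iff `∑_{i,j} λ_{i,j} P_i^{(d_i)}(L_j(x)) ≡ 0`. -/
theorem nonhomogeneous_reduction {p n k m K : ℕ} [Fact p.Prime]
    (L : Fin m → Fin k → ZMod p) (hL : HomogeneousSystem L)
    (D : Fin K → ℕ) (hDp : ∀ i, D i < p)
    (P : Fin K → MvPolynomial (Fin n) (ZMod p))
    (hdeg : ∀ i, (P i).totalDegree ≤ D i)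
    (hind : LinearIndependent (ZMod p)
      (fun i => MvPolynomial.homogeneousComponent (D i) (P i)))
    (lam : Fin K → Fin m → ZMod p) :
    ((∀ x : Fin k → Fin n → ZMod p,
        (∑ i : Fin K, ∑ j : Fin m,
          lam i j * MvPolynomial.eval
            (fun v : Fin n => ∑ j' : Fin k, L j j' * x j' v) (P i)) = 0) ↔
      (∀ x : Fin k → Fin n → ZMod p,
        (∑ i : Fin K, ∑ j : Fin m,
          lam i j * MvPolynomial.eval
            (fun v : Fin n => ∑ j' : Fin k, L j j' * x j' v)
            (MvPolynomial.homogeneousComponent (D i) (P i))) = 0)) := by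
  have hP : ∀ i, (MvPolynomial.homogeneousComponent (D i) (P i)).totalDegree ≤ D i := fun i =>
    (MvPolynomial.homogeneousComponent_isHomogeneous (D i) (P i)).totalDegree_le
  constructor
  · intro h
    have hs := NonhomAux.spade_of_full L hL D hDp P hdeg hind lam h
    intro x
    refine Finset.sum_eq_zero fun i _ => ?_
    exact NonhomAux.row_identity L (lam i) (hDp i) (hs i) _ (hP i) x
  · intro h
    have hs := NonhomAux.spade_of_top L hL D hDp P hind lam h
    intro x
    refine Finset.sum_eq_zero fun i _ => ?_
    exact NonhomAux.row_identity L (lam i) (hDp i) (hs i) _ (hdeg i) x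
end

section
/- Every homogeneous system of linear forms over 𝔽_p is isomorphic to a system of linear forms in which some variable appears with coefficient exactly 1 in every linear form. -/
open Finset

/-- Two systems of linear forms are isomorphic if there is a bijection between them
(a permutation of the indices) extending to an invertible linear map between their
spans. -/
def IsomorphicSystems {p m k k' : ℕ} (L : Fin m → Fin k → ZMod p)
    (L' : Fin m → Fin k' → ZMod p) : Prop :=
  ∃ (σ : Equiv.Perm (Fin m))
    (T : (Submodule.span (ZMod p) (Set.range L)) ≃ₗ[ZMod p]
         (Submodule.span (ZMod p) (Set.range L'))),
    ∀ i : Fin m,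
      ((T ⟨L i, Submodule.subset_span (Set.mem_range_self i)⟩ : _) : Fin k' → ZMod p) =
        L' (σ i)

/-- Every homogeneous system of linear forms is isomorphic to a system in which some
variable appears with coefficient exactly `1` in every linear form. -/
theorem homogeneous_iso_coeff_one {p m k : ℕ} [Fact p.Prime]
    (L : Fin m → Fin k → ZMod p) (hL : HomogeneousSystem L) :
    ∃ (k' : ℕ) (L' : Fin m → Fin k' → ZMod p),
      IsomorphicSystems L L' ∧ ∃ j : Fin k', ∀ i : Fin m, L' i j = 1 := by
  classical
  -- Step 1: every linear relation among the `L i` has coefficient sum zero.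
  have key : ∀ a : Fin m → ZMod p, (∑ i, a i • L i) = 0 → (∑ i, a i) = 0 := by
    intro a ha
    have h := hL 1 (fun _ => 1) (fun _ _ => 0)
    have h0 : (0 : Fin k → Fin 1 → ZMod p) ∈ univ.filter
        (fun x : Fin k → Fin 1 → ZMod p =>
          ∀ i, (∑ j : Fin k, L i j • x j) = (fun _ _ => (0 : ZMod p)) i) := by
      simp only [mem_filter, mem_univ, true_and]
      intro i
      funext t
      simp
    have hpos : 0 < (univ.filter
        (fun x : Fin k → Fin 1 → ZMod p =>
          ∀ i, (∑ j : Fin k, L i j • x j) = (fun _ _ => (0 : ZMod p)) i)).card :=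
      card_pos.mpr ⟨0, h0⟩
    rw [h] at hpos
    obtain ⟨x, hx⟩ := card_pos.mp hpos
    simp only [mem_filter, mem_univ, true_and] at hx
    set y : Fin k → ZMod p := fun j => x j 0 with hy
    have hyv : ∀ i, (∑ j : Fin k, L i j * y j) = -1 := by
      intro i
      have := congrFun (hx i) 0
      simp only [Pi.add_apply, Finset.sum_apply, Pi.smul_apply, smul_eq_mul] at this
      have h1 : (∑ j : Fin k, L i j * y j) + 1 = 0 := this
      linear_combination h1
    have hswap : (∑ i, a i * (∑ j : Fin k, L i j * y j)) = 0 := by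
      have hz : ∀ j, (∑ i, a i * L i j) = 0 := by
        intro j
        have := congrFun ha j
        simpa [Finset.sum_apply] using this
      calc (∑ i, a i * (∑ j : Fin k, L i j * y j))
          = ∑ i, ∑ j : Fin k, a i * L i j * y j := by
            simp [Finset.mul_sum, mul_assoc]
        _ = ∑ j : Fin k, ∑ i, a i * L i j * y j := Finset.sum_comm
        _ = ∑ j : Fin k, (∑ i, a i * L i j) * y j := by
            simp [Finset.sum_mul, mul_assoc]
        _ = 0 := by simp [hz]
    have : -(∑ i, a i) = 0 := by
      calc -(∑ i, a i) = ∑ i, a i * (-1) := by simp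
        _ = ∑ i, a i * (∑ j : Fin k, L i j * y j) := by
            refine Finset.sum_congr rfl fun i _ => ?_
            rw [hyv i]
        _ = 0 := hswap
    exact neg_eq_zero.mp this
  -- Step 2: append a new variable with coefficient 1 everywhere.
  set L' : Fin m → Fin (k + 1) → ZMod p := fun i => Fin.snoc (L i) 1 with hL'
  refine ⟨k + 1, L', ?_, ⟨Fin.last k, fun i => by simp [L']⟩⟩
  let π : (Fin (k + 1) → ZMod p) →ₗ[ZMod p] (Fin k → ZMod p) :=
    { toFun := fun x => x ∘ Fin.castSucc
      map_add' := fun x y => rfl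
      map_smul' := fun c x => rfl }
  have hπL' : ∀ i, π (L' i) = L i := by
    intro i
    funext j
    simp [π, L']
  have hmem : ∀ y ∈ Submodule.span (ZMod p) (Set.range L'),
      π y ∈ Submodule.span (ZMod p) (Set.range L) := by
    intro y hy
    induction hy using Submodule.span_induction with
    | mem z hz =>
        obtain ⟨i, rfl⟩ := hz
        rw [hπL']
        exact Submodule.subset_span (Set.mem_range_self i)
    | zero => simp
    | add a b _ _ ha hb => rw [map_add]; exact Submodule.add_mem _ ha hb
    | smul c a _ ha => rw [map_smul]; exact Submodule.smul_mem _ _ ha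
  let ψ : (Submodule.span (ZMod p) (Set.range L')) →ₗ[ZMod p]
      (Submodule.span (ZMod p) (Set.range L)) :=
    (π.comp (Submodule.span (ZMod p) (Set.range L')).subtype).codRestrict _
      (fun y => hmem y.1 y.2)
  have hψL' : ∀ i, ψ ⟨L' i, Submodule.subset_span (Set.mem_range_self i)⟩ =
      ⟨L i, Submodule.subset_span (Set.mem_range_self i)⟩ := by
    intro i
    exact Subtype.ext (hπL' i)
  have hinj : Function.Injective ψ := by
    rw [injective_iff_map_eq_zero]
    intro y hy
    have hy0 : π y.1 = 0 := congrArg Subtype.val hy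
    obtain ⟨c, hc⟩ := Submodule.mem_span_range_iff_exists_fun (ZMod p) |>.mp y.2
    have hrel : (∑ i, c i • L i) = 0 := by
      rw [← hy0, ← hc, map_sum]
      refine Finset.sum_congr rfl fun i _ => ?_
      rw [map_smul, hπL']
    have hsum := key c hrel
    have hval : y.1 = 0 := by
      funext j
      induction j using Fin.lastCases with
      | last =>
          rw [← hc]
          simp only [Finset.sum_apply, Pi.smul_apply, smul_eq_mul, Pi.zero_apply]
          have : ∀ i, L' i (Fin.last k) = 1 := fun i => by simp [L']
          calc (∑ i, c i * L' i (Fin.last k)) = ∑ i, c i := by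
                refine Finset.sum_congr rfl fun i _ => ?_
                rw [this i, mul_one]
            _ = 0 := hsum
      | cast j =>
          have := congrFun hy0 j
          simpa [π] using this
    exact Subtype.ext hval
  have hsurj : Function.Surjective ψ := by
    intro z
    obtain ⟨c, hc⟩ := Submodule.mem_span_range_iff_exists_fun (ZMod p) |>.mp z.2
    have hw : (∑ i, c i • L' i) ∈ Submodule.span (ZMod p) (Set.range L') :=
      Submodule.sum_smul_mem _ _ (fun i _ => Submodule.subset_span (Set.mem_range_self i))
    refine ⟨⟨∑ i, c i • L' i, hw⟩, ?_⟩
    apply Subtype.ext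
    show π (∑ i, c i • L' i) = z.1
    rw [map_sum, ← hc]
    refine Finset.sum_congr rfl fun i _ => ?_
    rw [map_smul, hπL']
  let e := LinearEquiv.ofBijective ψ ⟨hinj, hsurj⟩
  refine ⟨1, e.symm, fun i => ?_⟩
  have : e.symm ⟨L i, Submodule.subset_span (Set.mem_range_self i)⟩ =
      ⟨L' i, Submodule.subset_span (Set.mem_range_self i)⟩ := by
    apply e.injective
    rw [e.apply_symm_apply]
    exact (hψL' i).symm
  rw [this]
  simp
end
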